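/- Let 0 < β₁ < 1, 0 < β₂ < 1, and set κ = (1−β₁)(1+β₂)/(4β₂), γ = (1+3β₂)/(2β₂), ξ* = 1/(2β₁) − 1/(2β₂). Let f : (0,∞) → ℝ be continuously differentiable, and assume there exist C, c > 0 such that |f(x)| ≤ C for all x > 0, |f'(x)| ≤ C/x for 0 < x ≤ 1, and |f(x)| + |f'(x)| ≤ C e^{−cx} for x ≥ 1. Define A f(x) = −β₁ f'(x) + ∫_0^∞ (f(x+a) − f(x)) (κ/x²)(1 + a/x)^{−γ} da for x > 0. Then for every complex ξ with Re ξ > 1, the Mellin transforms M[Af](ξ) and M[f](ξ−1) converge absolutely and M[Af](ξ) = (β₁(ξ−1)(ξ−ξ*)/(ξ+γ−2)) · M[f](ξ−1). -/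

import Mathlib

/-
Substituting `a = x t` turns the jump part of `A f x` into `(κ / x) · jumpIntegral γ f x`.
By Fubini, and since the dilation `x ↦ (1 + t) x` multiplies a Mellin transform at `s` by
`(1 + t)^(-s)`, the Mellin transform of `jumpIntegral γ f` at `s` is `M[f](s)` times
`∫₀^∞ ((1 + t)^(-s) - 1) (1 + t)^(-γ) dt = 1 / (s + γ - 1) - 1 / (γ - 1)`; the factor `1 / x`
shifts `s` to `ξ - 1`. Integration by parts gives `M[f'](ξ) = -(ξ - 1) M[f](ξ - 1)`, and the
drift and jump contributions combine to the stated multiplier because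
`κ = β₁ (γ - 1) (γ - 2 + ξs)`.
-/

open MeasureTheory Set Filter Complex Asymptotics Topology

lemma integrableOn_Ioi_one_add_cpow {p : ℂ} (hp : 1 < p.re) :
    IntegrableOn (fun t : ℝ => ((1 + t : ℝ) : ℂ) ^ (-p)) (Ioi 0) := by
  have h := (measurePreserving_add_left volume (1 : ℝ)).integrableOn_image
    (measurableEmbedding_addLeft 1) (f := fun t : ℝ => (t : ℂ) ^ (-p)) (s := Ioi 0)
  rw [image_const_add_Ioi, add_zero] at h
  exact h.1 (integrableOn_Ioi_cpow_of_lt (by simpa using hp) one_pos)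

lemma integral_Ioi_one_add_cpow {p : ℂ} (hp : 1 < p.re) :
    ∫ t in Ioi (0 : ℝ), ((1 + t : ℝ) : ℂ) ^ (-p) = 1 / (p - 1) := by
  have h := (measurePreserving_add_left volume (1 : ℝ)).setIntegral_image_emb
    (measurableEmbedding_addLeft 1) (fun t : ℝ => (t : ℂ) ^ (-p)) (Ioi 0)
  rw [image_const_add_Ioi, add_zero] at h
  rw [← h, integral_Ioi_cpow_of_lt (by simpa using hp) one_pos]
  have hp1 : p - 1 ≠ 0 := fun h0 => by
    have := congrArg re h0
    rw [sub_re, one_re, zero_re] at this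
    linarith
  rw [ofReal_one, one_cpow, show -p + 1 = -(p - 1) by ring]
  field_simp

lemma cpow_smul_comp_mul_left {E : Type*} [NormedAddCommGroup E] [NormedSpace ℂ E]
    (g : ℝ → E) (s : ℂ) {u x : ℝ} (hu : 0 < u) (hx : 0 < x) :
    (x : ℂ) ^ (s - 1) • g (u * x) =
      (u : ℂ) ^ (1 - s) • (((u * x : ℝ) : ℂ) ^ (s - 1) • g (u * x)) := by
  rw [ofReal_mul, mul_cpow_ofReal_nonneg hu.le hx.le, ← mul_smul, ← mul_assoc,
    ← cpow_add _ _ (ofReal_ne_zero.2 hu.ne')]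
  simp

lemma integral_norm_cpow_smul_comp_mul_left {E : Type*} [NormedAddCommGroup E]
    [NormedSpace ℂ E] (g : ℝ → E) (s : ℂ) {u : ℝ} (hu : 0 < u) :
    ∫ x in Ioi (0 : ℝ), ‖(x : ℂ) ^ (s - 1) • g (u * x)‖
      = u ^ (-s.re) * ∫ x in Ioi (0 : ℝ), ‖(x : ℂ) ^ (s - 1) • g x‖ := by
  have h := integral_comp_mul_left_Ioi (fun y : ℝ => ‖(y : ℂ) ^ (s - 1) • g y‖) 0 hu
  rw [mul_zero] at h
  rw [setIntegral_congr_fun measurableSet_Ioi fun x hx => by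
      rw [cpow_smul_comp_mul_left g s hu hx, norm_smul], integral_const_mul, h, smul_eq_mul,
    norm_cpow_eq_rpow_re_of_pos hu, ← mul_assoc, ← Real.rpow_neg_one, ← Real.rpow_add hu]
  congr 2
  simp only [sub_re, one_re]
  ring

lemma integrable_prod_mellin_dilation {g : ℝ → ℂ} {s γ : ℂ}
    (hgc : ContinuousOn g (Ioi 0)) (hg : MellinConvergent g s) (hsγ : 1 < s.re + γ.re) :
    Integrable (fun p : ℝ × ℝ => (p.1 : ℂ) ^ (s - 1) * g ((1 + p.2) * p.1) *
      ((1 + p.2 : ℝ) : ℂ) ^ (-γ)) ((volume.restrict (Ioi 0)).prod (volume.restrict (Ioi 0))) := by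
  have hpos : ∀ t ∈ Ioi (0 : ℝ), 0 < 1 + t := fun t ht => by linarith [mem_Ioi.1 ht]
  have hmeas : AEStronglyMeasurable (fun p : ℝ × ℝ => (p.1 : ℂ) ^ (s - 1) *
      g ((1 + p.2) * p.1) * ((1 + p.2 : ℝ) : ℂ) ^ (-γ))
      ((volume.restrict (Ioi 0)).prod (volume.restrict (Ioi 0))) := by
    rw [Measure.prod_restrict]
    refine ContinuousOn.aestronglyMeasurable ?_ (measurableSet_Ioi.prod measurableSet_Ioi)
    refine ContinuousOn.mul (ContinuousOn.mul ?_ ?_) ?_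
    · exact fun p hp => (continuousAt_ofReal_cpow_const _ _
        (Or.inr (ne_of_gt hp.1))).comp continuous_fst.continuousAt |>.continuousWithinAt
    · exact hgc.comp (by fun_prop) fun p hp => mul_pos (hpos _ hp.2) hp.1
    · exact fun p hp => ContinuousAt.continuousWithinAt <|
        (continuousAt_ofReal_cpow_const (1 + p.2) _ (Or.inr (hpos _ hp.2).ne')).comp
          (f := fun p : ℝ × ℝ => 1 + p.2) (by fun_prop)
  refine (integrable_prod_iff' hmeas).2 ⟨?_, ?_⟩
  · filter_upwards [ae_restrict_mem measurableSet_Ioi] with t ht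
    exact ((MellinConvergent.comp_mul_left (hpos t ht)).2 hg).mul_const _
  · have hmaj := ((integrableOn_Ioi_one_add_cpow (p := s + γ) (by simpa using hsγ)).norm.mul_const
      (∫ x in Ioi (0 : ℝ), ‖(x : ℂ) ^ (s - 1) • g x‖))
    refine IntegrableOn.congr_fun hmaj (fun t ht => ?_) measurableSet_Ioi
    have h1t := hpos t ht
    simp only [smul_eq_mul, norm_mul]
    rw [integral_mul_const]
    have hscale := integral_norm_cpow_smul_comp_mul_left g s h1t
    simp only [smul_eq_mul, norm_mul] at hscale
    rw [hscale]
    simp only [norm_cpow_eq_rpow_re_of_pos h1t, neg_re, add_re]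
    rw [Real.rpow_neg h1t.le, Real.rpow_neg h1t.le, Real.rpow_neg h1t.le, Real.rpow_add h1t]
    ring

noncomputable def jumpIntegral (γ : ℂ) (g : ℝ → ℂ) (x : ℝ) : ℂ :=
  ∫ t in Ioi 0, (g ((1 + t) * x) - g x) * ((1 + t : ℝ) : ℂ) ^ (-γ)

theorem hasMellin_jumpIntegral {g : ℝ → ℂ} {s γ : ℂ} (hgc : ContinuousOn g (Ioi 0))
    (hg : MellinConvergent g s) (hγ : 1 < γ.re) (hsγ : 1 < s.re + γ.re) :
    HasMellin (jumpIntegral γ g) s ((1 / (s + γ - 1) - 1 / (γ - 1)) * mellin g s) := by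
  set μ := volume.restrict (Ioi (0 : ℝ))
  have hpos : ∀ t ∈ Ioi (0 : ℝ), 0 < 1 + t := fun t ht => by linarith [mem_Ioi.1 ht]
  have hdil := integrable_prod_mellin_dilation hgc hg hsγ
  have hdiag : Integrable (fun p : ℝ × ℝ => (p.1 : ℂ) ^ (s - 1) * g p.1 *
      ((1 + p.2 : ℝ) : ℂ) ^ (-γ)) (μ.prod μ) :=
    Integrable.mul_prod (f := fun x : ℝ => (x : ℂ) ^ (s - 1) * g x) hg
      (integrableOn_Ioi_one_add_cpow hγ)
  have hsplit : (fun x : ℝ => (x : ℂ) ^ (s - 1) • jumpIntegral γ g x) = fun x : ℝ =>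
      ∫ t : ℝ, ((x : ℂ) ^ (s - 1) * g ((1 + t) * x) * ((1 + t : ℝ) : ℂ) ^ (-γ) -
        (x : ℂ) ^ (s - 1) * g x * ((1 + t : ℝ) : ℂ) ^ (-γ)) ∂μ := by
    ext x
    rw [jumpIntegral, smul_eq_mul, ← integral_const_mul]
    congr with t
    ring
  have hdil_int : ∫ p, (p.1 : ℂ) ^ (s - 1) * g ((1 + p.2) * p.1) * ((1 + p.2 : ℝ) : ℂ) ^ (-γ)
      ∂μ.prod μ = 1 / (s + γ - 1) * mellin g s := by
    rw [integral_prod_symm _ hdil,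
      ← integral_Ioi_one_add_cpow (p := s + γ) (by simpa using hsγ), ← integral_mul_const]
    refine setIntegral_congr_fun measurableSet_Ioi fun t ht => ?_
    dsimp only
    have h := mellin_comp_mul_left g s (hpos t ht)
    simp only [mellin, smul_eq_mul] at h ⊢
    rw [integral_mul_const, h, neg_add, cpow_add _ _ (ofReal_ne_zero.2 (hpos t ht).ne')]
    ring
  have hdiag_int : ∫ p, (p.1 : ℂ) ^ (s - 1) * g p.1 * ((1 + p.2 : ℝ) : ℂ) ^ (-γ) ∂μ.prod μ
      = 1 / (γ - 1) * mellin g s := by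
    have h := integral_prod_mul (μ := μ) (ν := μ) (fun x : ℝ => (x : ℂ) ^ (s - 1) * g x)
      (fun t : ℝ => ((1 + t : ℝ) : ℂ) ^ (-γ))
    rw [integral_Ioi_one_add_cpow hγ] at h
    exact h.trans (mul_comm _ _)
  refine ⟨?_, ?_⟩
  · rw [MellinConvergent, hsplit]
    exact (hdil.sub hdiag).integral_prod_left
  · have h := integral_prod _ (hdil.sub hdiag)
    rw [integral_sub' hdil hdiag, hdil_int, hdiag_int] at h
    rw [mellin, hsplit, sub_mul, h]
    rfl

lemma tendsto_cpow_mul_of_isBigO {l : Filter ℝ} (hl : ∀ᶠ x in l, 0 < x) {g : ℝ → ℂ}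
    {φ : ℝ → ℝ} {s : ℂ} (hg : g =O[l] φ) (hφ : Tendsto (fun x => x ^ s.re * φ x) l (𝓝 0)) :
    Tendsto (fun x : ℝ => (x : ℂ) ^ s * g x) l (𝓝 0) := by
  have hpow : (fun x : ℝ => (x : ℂ) ^ s) =O[l] fun x => x ^ s.re :=
    IsBigO.of_bound' <| hl.mono fun x hx => by
      rw [norm_cpow_eq_rpow_re_of_pos hx, Real.norm_of_nonneg (Real.rpow_nonneg hx.le _)]
  exact (hpow.mul hg).trans_tendsto hφ

lemma tendsto_cpow_mul_nhdsGT_zero_of_isBigO {g : ℝ → ℂ} {b : ℝ} {s : ℂ}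
    (hg : g =O[𝓝[>] 0] (· ^ (-b))) (hs : b < s.re) :
    Tendsto (fun x : ℝ => (x : ℂ) ^ s * g x) (𝓝[>] 0) (𝓝 0) := by
  refine tendsto_cpow_mul_of_isBigO self_mem_nhdsWithin hg ?_
  have h := (Real.continuousAt_rpow_const 0 (s.re - b) (Or.inr (sub_pos.2 hs).le)).tendsto
  rw [Real.zero_rpow (sub_pos.2 hs).ne'] at h
  exact (h.mono_left nhdsWithin_le_nhds).congr' <| eventually_mem_nhdsWithin.mono
    fun x (hx : 0 < x) => by simp only [sub_eq_add_neg, Real.rpow_add hx]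

lemma tendsto_cpow_mul_atTop_of_isBigO_exp {g : ℝ → ℂ} {a : ℝ} (ha : 0 < a)
    (hg : g =O[atTop] fun x => Real.exp (-a * x)) (s : ℂ) :
    Tendsto (fun x : ℝ => (x : ℂ) ^ s * g x) atTop (𝓝 0) :=
  tendsto_cpow_mul_of_isBigO (eventually_gt_atTop 0) hg
    (tendsto_rpow_mul_exp_neg_mul_atTop_nhds_zero _ _ ha)

theorem hasMellin_deriv_of_isBigO {g g' : ℝ → ℂ} {a b : ℝ} {s : ℂ} (ha : 0 < a)
    (hderiv : ∀ x ∈ Ioi 0, HasDerivAt g (g' x) x) (hg'c : ContinuousOn g' (Ioi 0))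
    (hg_top : g =O[atTop] fun x => Real.exp (-a * x))
    (hg'_top : g' =O[atTop] fun x => Real.exp (-a * x))
    (hg_bot : g =O[𝓝[>] 0] (· ^ (-b))) (hg'_bot : g' =O[𝓝[>] 0] (· ^ (-(b + 1))))
    (hs : b + 1 < s.re) :
    MellinConvergent g (s - 1) ∧ HasMellin g' s (-((s - 1) * mellin g (s - 1))) := by
  have hgc : ContinuousOn g (Ioi 0) := fun x hx => (hderiv x hx).continuousAt.continuousWithinAt
  have hs₁ : b < (s - 1).re := by
    rw [sub_re, one_re]
    linarith
  have hg := mellinConvergent_of_isBigO_rpow_exp ha (hgc.locallyIntegrableOn measurableSet_Ioi)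
    hg_top hg_bot hs₁
  have hg' := mellinConvergent_of_isBigO_rpow_exp ha (hg'c.locallyIntegrableOn measurableSet_Ioi)
    hg'_top hg'_bot hs
  have hpow : ∀ x ∈ Ioi (0 : ℝ),
      HasDerivAt (fun y : ℝ => (y : ℂ) ^ (s - 1)) ((s - 1) * (x : ℂ) ^ (s - 1 - 1)) x :=
    fun x hx => by
      simpa using (hasStrictDerivAt_cpow_const (c := s - 1)
        (ofReal_mem_slitPlane.2 hx)).hasDerivAt.comp_ofReal
  have hg₁ : IntegrableOn (fun x : ℝ => (s - 1) * (x : ℂ) ^ (s - 1 - 1) * g x) (Ioi 0) := by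
    have h := hg.const_mul (s - 1)
    simp only [smul_eq_mul, ← mul_assoc] at h
    exact h
  have h := integral_Ioi_mul_deriv_eq_deriv_mul hpow hderiv hg' hg₁
    (tendsto_cpow_mul_nhdsGT_zero_of_isBigO hg_bot hs₁)
    (tendsto_cpow_mul_atTop_of_isBigO_exp ha hg_top _)
  refine ⟨hg, hg', ?_⟩
  simp only [mellin, smul_eq_mul, mul_assoc, integral_const_mul] at h ⊢
  rw [h, sub_zero, zero_sub]

lemma ofReal_integral_jump_eq_jumpIntegral (f : ℝ → ℝ) (κ γ : ℝ) {x : ℝ} (hx : 0 < x) :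
    ((∫ a in Ioi (0 : ℝ), (f (x + a) - f x) * (κ / x ^ 2 * (1 + a / x) ^ (-γ)) : ℝ) : ℂ) =
      (κ : ℂ) • (x : ℂ) ^ (-1 : ℂ) • jumpIntegral γ (fun y => (f y : ℂ)) x := by
  have hsub := integral_comp_mul_left_Ioi
    (fun a : ℝ => (f (x + a) - f x) * (κ / x ^ 2 * (1 + a / x) ^ (-γ))) 0 hx
  rw [mul_zero] at hsub
  have hscaled :
      ∫ t in Ioi (0 : ℝ), (f (x + x * t) - f x) * (κ / x ^ 2 * (1 + x * t / x) ^ (-γ))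
        = κ / x ^ 2 * ∫ t in Ioi (0 : ℝ), (f ((1 + t) * x) - f x) * (1 + t) ^ (-γ) := by
    rw [← integral_const_mul]
    refine setIntegral_congr_fun measurableSet_Ioi fun t _ => ?_
    rw [mul_div_cancel_left₀ t hx.ne', show x + x * t = (1 + t) * x by ring]
    ring
  have hcast : jumpIntegral γ (fun y => (f y : ℂ)) x
      = ((∫ t in Ioi (0 : ℝ), (f ((1 + t) * x) - f x) * (1 + t) ^ (-γ) : ℝ) : ℂ) := by
    rw [jumpIntegral, ← integral_complex_ofReal]
    refine setIntegral_congr_fun measurableSet_Ioi fun t ht => ?_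
    have h1t : (0 : ℝ) ≤ 1 + t := by linarith [mem_Ioi.1 ht]
    push_cast [ofReal_cpow h1t]
    rfl
  rw [hscaled, smul_eq_mul, eq_inv_mul_iff_mul_eq₀ hx.ne'] at hsub
  rw [← hsub, hcast, cpow_neg_one, smul_eq_mul, smul_eq_mul]
  generalize ∫ t in Ioi (0 : ℝ), (f ((1 + t) * x) - f x) * (1 + t) ^ (-γ) = I
  push_cast
  field_simp

theorem hasMellin_generator {β₁ κ γ : ℝ} {f f' Af : ℝ → ℝ} {s : ℂ}
    (hAf : ∀ x : ℝ, 0 < x → Af x =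
      -β₁ * f' x + ∫ a in Ioi (0 : ℝ), (f (x + a) - f x) * (κ / x ^ 2 * (1 + a / x) ^ (-γ)))
    (hf' : MellinConvergent (fun x => (f' x : ℂ)) s)
    (hJ : MellinConvergent (jumpIntegral γ fun y => (f y : ℂ)) (s - 1)) :
    HasMellin (fun x => (Af x : ℂ)) s
      (-β₁ * mellin (fun x => (f' x : ℂ)) s
        + κ * mellin (jumpIntegral γ fun y => (f y : ℂ)) (s - 1)) := by
  have hJ' : MellinConvergent
      (fun x => (x : ℂ) ^ (-1 : ℂ) • jumpIntegral γ (fun y => (f y : ℂ)) x) s := by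
    rw [MellinConvergent.cpow_smul, ← sub_eq_add_neg]
    exact hJ
  have hsum := hasMellin_add (hf'.const_smul (-β₁ : ℂ)) (hJ'.const_smul (κ : ℂ))
  rw [mellin_const_smul, mellin_const_smul, mellin_cpow_smul, ← sub_eq_add_neg] at hsum
  have heq : ∀ x ∈ Ioi (0 : ℝ), (Af x : ℂ) = (-β₁ : ℂ) • (f' x : ℂ) +
      (κ : ℂ) • (x : ℂ) ^ (-1 : ℂ) • jumpIntegral γ (fun y => (f y : ℂ)) x := fun x hx => by
    rw [hAf x hx, ← ofReal_integral_jump_eq_jumpIntegral f κ γ hx]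
    push_cast
    rfl
  refine ⟨hsum.1.congr_fun (fun x hx => by simp only [heq x hx]) measurableSet_Ioi, ?_⟩
  exact (setIntegral_congr_fun measurableSet_Ioi fun x hx => by simp only [heq x hx]).trans
    hsum.2

-- Equivalently `γ - 2 + ξs = κ / (β₁ (γ - 1))`: this is what makes `ξs` the zero of the multiplier.
lemma kappa_eq {β₁ β₂ κ γ ξs : ℝ} (hβ₁ : β₁ ≠ 0) (hβ₂ : β₂ ≠ 0)
    (hκ : κ = (1 - β₁) * (1 + β₂) / (4 * β₂)) (hγ : γ = (1 + 3 * β₂) / (2 * β₂))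
    (hξs : ξs = 1 / (2 * β₁) - 1 / (2 * β₂)) :
    κ = β₁ * (γ - 1) * (γ - 2 + ξs) := by
  rw [hκ, hγ, hξs]
  field_simp
  ring

lemma mellin_multiplier_eq {β₁ κ γ ξs : ℝ} (hκ : κ = β₁ * (γ - 1) * (γ - 2 + ξs)) (hγ : 1 < γ)
    {ξ : ℂ} (hξ : 1 < ξ.re) (M : ℂ) :
    -β₁ * -((ξ - 1) * M) + κ * ((1 / (ξ - 1 + γ - 1) - 1 / (γ - 1)) * M) =
      β₁ * (ξ - 1) * (ξ - ξs) / (ξ + γ - 2) * M := by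
  have hξγ : (ξ + γ - 2 : ℂ) ≠ 0 := fun h => by
    have := congrArg re h
    rw [sub_re, add_re, ofReal_re, re_ofNat, zero_re] at this
    linarith
  have hγ₁ : (γ - 1 : ℂ) ≠ 0 := by exact_mod_cast (sub_pos.2 hγ).ne'
  rw [hκ, show ξ - 1 + γ - 1 = ξ + γ - 2 by ring]
  push_cast
  field_simp
  ring

theorem mellin_generator_general (β₁ β₂ κ γ ξs : ℝ)
    (hβ₁ : 0 < β₁) (hβ₂ : 0 < β₂)
    (hκ : κ = (1 - β₁) * (1 + β₂) / (4 * β₂))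
    (hγ : γ = (1 + 3 * β₂) / (2 * β₂))
    (hξs : ξs = 1 / (2 * β₁) - 1 / (2 * β₂))
    (f f' : ℝ → ℝ)
    (hderiv : ∀ x ∈ Set.Ioi (0:ℝ), HasDerivAt f (f' x) x)
    (hcont : ContinuousOn f' (Set.Ioi 0))
    (C c : ℝ) (hc : 0 < c)
    (hfbd : ∀ x : ℝ, 0 < x → |f x| ≤ C)
    (hf'bd : ∀ x : ℝ, 0 < x → x ≤ 1 → |f' x| ≤ C / x)
    (hdecay : ∀ x : ℝ, 1 ≤ x → |f x| + |f' x| ≤ C * Real.exp (-c * x))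
    (Af : ℝ → ℝ)
    (hAf : ∀ x : ℝ, 0 < x → Af x =
      -β₁ * f' x + ∫ a in Set.Ioi (0:ℝ), (f (x + a) - f x) * (κ / x ^ 2 * (1 + a / x) ^ (-γ)))
    (ξ : ℂ) (hξ : 1 < ξ.re) :
    IntegrableOn (fun x : ℝ => (x:ℂ) ^ (ξ - 1) * (Af x : ℂ)) (Set.Ioi 0) ∧
    IntegrableOn (fun x : ℝ => (x:ℂ) ^ (ξ - 2) * (f x : ℂ)) (Set.Ioi 0) ∧
    ∫ x in Set.Ioi (0:ℝ), (x:ℂ) ^ (ξ - 1) * (Af x : ℂ) =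
      ((β₁:ℂ) * (ξ - 1) * (ξ - (ξs:ℂ)) / (ξ + (γ:ℂ) - 2)) *
        ∫ x in Set.Ioi (0:ℝ), (x:ℂ) ^ (ξ - 2) * (f x : ℂ) := by
  have hf_top : (fun x => (f x : ℂ)) =O[atTop] fun x => Real.exp (-c * x) :=
    IsBigO.of_bound C <| (eventually_ge_atTop 1).mono fun x hx => by
      simpa using (le_add_of_nonneg_right (abs_nonneg (f' x))).trans (hdecay x hx)
  have hf'_top : (fun x => (f' x : ℂ)) =O[atTop] fun x => Real.exp (-c * x) :=
    IsBigO.of_bound C <| (eventually_ge_atTop 1).mono fun x hx => by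
      simpa using (le_add_of_nonneg_left (abs_nonneg (f x))).trans (hdecay x hx)
  have hf_bot : (fun x => (f x : ℂ)) =O[𝓝[>] 0] (· ^ (-(0 : ℝ))) :=
    IsBigO.of_bound C <| eventually_mem_nhdsWithin.mono fun x hx => by simpa using hfbd x hx
  have hf'_bot : (fun x => (f' x : ℂ)) =O[𝓝[>] 0] (· ^ (-(0 + 1 : ℝ))) :=
    IsBigO.of_bound C <| eventually_of_mem (Ioc_mem_nhdsGT one_pos) fun x hx => by
      simpa [Real.rpow_neg_one, abs_of_pos hx.1, div_eq_mul_inv] using hf'bd x hx.1 hx.2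
  obtain ⟨hMf, hMf', hD⟩ := hasMellin_deriv_of_isBigO hc
    (fun x hx => (hderiv x hx).ofReal_comp) (continuous_ofReal.comp_continuousOn hcont)
    hf_top hf'_top hf_bot hf'_bot (by simpa using hξ)
  have hγ₁ : 1 < γ := by
    rw [hγ, lt_div_iff₀ (by positivity)]
    linarith
  have hfc : ContinuousOn f (Ioi 0) := fun x hx =>
    (hderiv x hx).continuousAt.continuousWithinAt
  have hJ := hasMellin_jumpIntegral (g := fun y => (f y : ℂ)) (γ := γ)
    (continuous_ofReal.comp_continuousOn hfc) hMf (by simpa using hγ₁)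
    (by rw [sub_re, one_re, ofReal_re]; linarith)
  have hA := hasMellin_generator hAf hMf' hJ.1
  rw [hJ.2, hD, mellin_multiplier_eq (kappa_eq hβ₁.ne' hβ₂.ne' hκ hγ hξs) hγ₁ hξ] at hA
  rw [show ξ - 2 = ξ - 1 - 1 by ring]
  exact ⟨hA.1, hMf, hA.2⟩

/-- Mellin transform identity for the generator `A` of the distance process:
for `0 < β₁, β₂ < 1`, `κ = (1-β₁)(1+β₂)/(4β₂)`, `γ = (1+3β₂)/(2β₂)`,
`ξ* = 1/(2β₁) - 1/(2β₂)`, and `f` a `C¹` function on `(0,∞)` which is bounded, satisfies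
`|f'(x)| ≤ C/x` near `0` and decays exponentially (together with `f'`) near `∞`,
the Mellin transforms `M[Af](ξ)` and `M[f](ξ-1)` converge absolutely for `Re ξ > 1` and
`M[Af](ξ) = (β₁(ξ-1)(ξ-ξ*)/(ξ+γ-2)) M[f](ξ-1)`. -/
theorem mellin_generator (β₁ β₂ κ γ ξs : ℝ)
    (hβ₁ : 0 < β₁) (hβ₁' : β₁ < 1) (hβ₂ : 0 < β₂) (hβ₂' : β₂ < 1)
    (hκ : κ = (1 - β₁) * (1 + β₂) / (4 * β₂))
    (hγ : γ = (1 + 3 * β₂) / (2 * β₂))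
    (hξs : ξs = 1 / (2 * β₁) - 1 / (2 * β₂))
    (f f' : ℝ → ℝ)
    (hderiv : ∀ x ∈ Set.Ioi (0:ℝ), HasDerivAt f (f' x) x)
    (hcont : ContinuousOn f' (Set.Ioi 0))
    (C c : ℝ) (hC : 0 < C) (hc : 0 < c)
    (hfbd : ∀ x : ℝ, 0 < x → |f x| ≤ C)
    (hf'bd : ∀ x : ℝ, 0 < x → x ≤ 1 → |f' x| ≤ C / x)
    (hdecay : ∀ x : ℝ, 1 ≤ x → |f x| + |f' x| ≤ C * Real.exp (-c * x))
    (Af : ℝ → ℝ)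
    (hAf : ∀ x : ℝ, 0 < x → Af x =
      -β₁ * f' x + ∫ a in Set.Ioi (0:ℝ), (f (x + a) - f x) * (κ / x ^ 2 * (1 + a / x) ^ (-γ)))
    (ξ : ℂ) (hξ : 1 < ξ.re) :
    IntegrableOn (fun x : ℝ => (x:ℂ) ^ (ξ - 1) * (Af x : ℂ)) (Set.Ioi 0) ∧
    IntegrableOn (fun x : ℝ => (x:ℂ) ^ (ξ - 2) * (f x : ℂ)) (Set.Ioi 0) ∧
    ∫ x in Set.Ioi (0:ℝ), (x:ℂ) ^ (ξ - 1) * (Af x : ℂ) =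
      ((β₁:ℂ) * (ξ - 1) * (ξ - (ξs:ℂ)) / (ξ + (γ:ℂ) - 2)) *
        ∫ x in Set.Ioi (0:ℝ), (x:ℂ) ^ (ξ - 2) * (f x : ℂ) :=
  mellin_generator_general β₁ β₂ κ γ ξs hβ₁ hβ₂ hκ hγ hξs f f' hderiv hcont C c hc hfbd hf'bd hdecay
    Af hAf ξ hξ
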